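/- Let φ:(M²,g)→(N^n,h) be a biharmonic Riemannian immersion with constant mean curvature |H|. Then at each point, |A_H|² = −|∇^⊥H|² + Σ_{i=1}^{2} R^N(X_i,H,X_i,H), where {X₁,X₂} is an orthonormal frame of M; in particular, if R^N(U,V,U,V) ≤ K₀ for all orthonormal pairs {U,V}, then |A_H|² ≤ 2K₀|H|². -/
import Mathlib


/-!
Abstract framework for the paper "Biharmonic surfaces of constant mean curvature"
(Loubeau–Oniciuc).  Mathlib has no theory of tension fields, pull-back connections or
second fundamental forms of maps between Riemannian manifolds, so we record the local
geometric data of a smooth map `φ : (M,g) → (N,h)` abstractly, in a fixed orthonormal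
trivialization of `TM` (modelled on the inner product space `V`) and of the pull-back
bundle `φ⁻¹TN` (modelled on the inner product space `W`).  Vector fields on `M` are maps
`M → V`, sections of `φ⁻¹TN` are maps `M → W`, the metrics are the pointwise inner
products, and the Levi-Civita connection of `M`, the pull-back connection, `dφ`, the
curvature of `N` and the derivative of functions are data subject to the usual axioms
(Leibniz rules, metric compatibility, torsion-freeness, curvature identities).
-/

open scoped BigOperators RealInnerProductSpace

noncomputable section

namespace ArXiv13057020

variable {M V W : Type*}
  [NormedAddCommGroup V] [InnerProductSpace ℝ V]
  [NormedAddCommGroup W] [InnerProductSpace ℝ W]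
  {ι : Type*} [Fintype ι]

/-- `dφ(X)` of a vector field `X`, from the pointwise differential. -/
def dphiV (dphiPt : M → V →ₗ[ℝ] W) (X : M → V) : M → W :=
  fun q => dphiPt q (X q)

/-- The second fundamental form `∇dφ(X,Y) = ∇^φ_X (dφ(Y)) − dφ(∇^M_X Y)` of the map. -/
def sff (nablaM : (M → V) → (M → V) → (M → V))
    (nabla : (M → V) → (M → W) → (M → W))
    (dphiPt : M → V →ₗ[ℝ] W) (X Y : M → V) : M → W :=
  nabla X (dphiV dphiPt Y) - dphiV dphiPt (nablaM X Y)

/-- `(∇²dφ)(X,Y,Z) = (∇_X ∇dφ)(Y,Z)`. -/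
def sff2 (nablaM : (M → V) → (M → V) → (M → V))
    (nabla : (M → V) → (M → W) → (M → W))
    (dphiPt : M → V →ₗ[ℝ] W) (X Y Z : M → V) : M → W :=
  nabla X (sff nablaM nabla dphiPt Y Z)
    - sff nablaM nabla dphiPt (nablaM X Y) Z
    - sff nablaM nabla dphiPt Y (nablaM X Z)

/-- Second covariant derivative `(∇²s)(X,Y) = ∇_X ∇_Y s − ∇_{∇^M_X Y} s` of a section. -/
def n2Sec (nablaM : (M → V) → (M → V) → (M → V))
    (nabla : (M → V) → (M → W) → (M → W))
    (X Y : M → V) (s : M → W) : M → W :=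
  nabla X (nabla Y s) - nabla (nablaM X Y) s

/-- Curvature `R(X,Y) = [∇_X,∇_Y] − ∇_{[X,Y]}` of the pull-back bundle, where
`[X,Y] = ∇^M_X Y − ∇^M_Y X` by torsion-freeness. -/
def curvSec (nablaM : (M → V) → (M → V) → (M → V))
    (nabla : (M → V) → (M → W) → (M → W))
    (X Y : M → V) (s : M → W) : M → W :=
  nabla X (nabla Y s) - nabla Y (nabla X s) - nabla (nablaM X Y - nablaM Y X) s

/-- Curvature of `(M,g)`, convention `R(X,Y) = [∇_X,∇_Y] − ∇_{[X,Y]}`. -/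
def curvM (nablaM : (M → V) → (M → V) → (M → V)) (X Y Z : M → V) : M → V :=
  nablaM X (nablaM Y Z) - nablaM Y (nablaM X Z) - nablaM (nablaM X Y - nablaM Y X) Z

/-- The tension field `τ(φ) = tr ∇dφ`, computed in the orthonormal frame `b`. -/
def tension (b : OrthonormalBasis ι ℝ V)
    (nablaM : (M → V) → (M → V) → (M → V))
    (nabla : (M → V) → (M → W) → (M → W))
    (dphiPt : M → V →ₗ[ℝ] W) : M → W :=
  fun q => ∑ i, sff nablaM nabla dphiPt (fun _ => b i) (fun _ => b i) q

/-- The rough Laplacian `Δs = −tr ∇²s` on sections of `φ⁻¹TN`. -/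
def lapSec (b : OrthonormalBasis ι ℝ V)
    (nablaM : (M → V) → (M → V) → (M → V))
    (nabla : (M → V) → (M → W) → (M → W)) (s : M → W) : M → W :=
  fun q => -∑ i, n2Sec nablaM nabla (fun _ => b i) (fun _ => b i) s q

/-- The Ricci operator `Ric^M(X) = Σᵢ R^M(X,Xᵢ)Xᵢ` of `M`. -/
def ricM (b : OrthonormalBasis ι ℝ V)
    (nablaM : (M → V) → (M → V) → (M → V)) (X : M → V) : M → V :=
  fun q => ∑ i, curvM nablaM X (fun _ => b i) (fun _ => b i) q

/-- The Gaussian curvature `K^M = ⟨R^M(X₁,X₂)X₂, X₁⟩` of the surface `M`. -/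
def gaussK (b : OrthonormalBasis (Fin 2) ℝ V)
    (nablaM : (M → V) → (M → V) → (M → V)) : M → ℝ :=
  fun q => ⟪curvM nablaM (fun _ => b 0) (fun _ => b 1) (fun _ => b 1) q, (b 0 : V)⟫

/-- The Hessian `(∇df)(X,Y) = X(Y f) − (∇^M_X Y) f` of a function on `M`. -/
def hessF (D : (M → V) → (M → ℝ) → (M → ℝ))
    (nablaM : (M → V) → (M → V) → (M → V)) (f : M → ℝ) (X Y : M → V) : M → ℝ :=
  fun q => D X (D Y f) q - D (nablaM X Y) f q

/-- The Laplacian `Δf = −tr ∇df` on functions (sign convention `Δf = −f''` on `ℝ`). -/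
def lapF (b : OrthonormalBasis ι ℝ V) (D : (M → V) → (M → ℝ) → (M → ℝ))
    (nablaM : (M → V) → (M → V) → (M → V)) (f : M → ℝ) : M → ℝ :=
  fun q => -∑ i, hessF D nablaM f (fun _ => b i) (fun _ => b i) q

/-- The biharmonic stress-energy tensor
`S₂(X,Y) = (|τ(φ)|²/2 + ⟨dφ,∇τ(φ)⟩) g(X,Y) − ⟨dφ(X),∇_Y τ(φ)⟩ − ⟨dφ(Y),∇_X τ(φ)⟩`. -/
def S2 (b : OrthonormalBasis ι ℝ V)
    (nablaM : (M → V) → (M → V) → (M → V))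
    (nabla : (M → V) → (M → W) → (M → W))
    (dphiPt : M → V →ₗ[ℝ] W) (X Y : M → V) : M → ℝ :=
  fun q =>
    (⟪tension b nablaM nabla dphiPt q, tension b nablaM nabla dphiPt q⟫ / 2
        + ∑ i, ⟪dphiV dphiPt (fun _ => b i) q,
            nabla (fun _ => b i) (tension b nablaM nabla dphiPt) q⟫)
      * ⟪X q, Y q⟫
    - ⟪dphiV dphiPt X q, nabla Y (tension b nablaM nabla dphiPt) q⟫
    - ⟪dphiV dphiPt Y q, nabla X (tension b nablaM nabla dphiPt) q⟫

/-- Covariant derivative `(∇_X T)(Y,Z)` of a `(0,2)`-tensor on `M`. -/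
def nablaT (D : (M → V) → (M → ℝ) → (M → ℝ))
    (nablaM : (M → V) → (M → V) → (M → V))
    (T : (M → V) → (M → V) → M → ℝ) (X Y Z : M → V) : M → ℝ :=
  fun q => D X (T Y Z) q - T (nablaM X Y) Z q - T Y (nablaM X Z) q

/-- Second covariant derivative `(∇²T)(X,Y;Z,Z')` of a `(0,2)`-tensor on `M`. -/
def nabla2T (D : (M → V) → (M → ℝ) → (M → ℝ))
    (nablaM : (M → V) → (M → V) → (M → V))
    (T : (M → V) → (M → V) → M → ℝ) (X Y Z Z' : M → V) : M → ℝ :=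
  fun q => D X (nablaT D nablaM T Y Z Z') q
    - nablaT D nablaM T (nablaM X Y) Z Z' q
    - nablaT D nablaM T Y (nablaM X Z) Z' q
    - nablaT D nablaM T Y Z (nablaM X Z') q

/-- Rough Laplacian `Δ^R T = −tr ∇²T` on `(0,2)`-tensors. -/
def lapT (b : OrthonormalBasis ι ℝ V) (D : (M → V) → (M → ℝ) → (M → ℝ))
    (nablaM : (M → V) → (M → V) → (M → V))
    (T : (M → V) → (M → V) → M → ℝ) (X Y : M → V) : M → ℝ :=
  fun q => -∑ i, nabla2T D nablaM T (fun _ => b i) (fun _ => b i) X Y q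

/-- All the geometric data of a smooth map `φ : (M,g) → (N,h)` between Riemannian
manifolds, in a fixed orthonormal trivialization of `TM` and `φ⁻¹TN`, together with
the usual axioms it satisfies. -/
structure Geometry (M V W : Type*)
    [NormedAddCommGroup V] [InnerProductSpace ℝ V]
    [NormedAddCommGroup W] [InnerProductSpace ℝ W] where
  /-- the derivative `X(f)` of functions along vector fields -/
  D : (M → V) → (M → ℝ) → (M → ℝ)
  /-- the Levi-Civita connection of `(M,g)` -/
  nablaM : (M → V) → (M → V) → (M → V)
  /-- the pull-back connection on `φ⁻¹TN` -/
  nabla : (M → V) → (M → W) → (M → W)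
  /-- the differential of `φ`, pointwise -/
  dphiPt : M → V →ₗ[ℝ] W
  /-- the curvature tensor of `(N,h)` along `φ`: `RN q a b c = R^N(a,b)c` -/
  RN : M → W → W → W → W
  D_const : ∀ (X : M → V) (c : ℝ), D X (fun _ => c) = fun _ => 0
  D_addX : ∀ (X Y : M → V) (f : M → ℝ), D (X + Y) f = D X f + D Y f
  D_addF : ∀ (X : M → V) (f g : M → ℝ), D X (f + g) = D X f + D X g
  D_smulX : ∀ (f : M → ℝ) (X : M → V) (g : M → ℝ),
    D (fun q => f q • X q) g = fun q => f q * D X g q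
  D_mul : ∀ (X : M → V) (f g : M → ℝ), D X (f * g) = f * D X g + g * D X f
  nablaM_addX : ∀ X Y Z : M → V, nablaM (X + Y) Z = nablaM X Z + nablaM Y Z
  nablaM_addY : ∀ X Y Z : M → V, nablaM X (Y + Z) = nablaM X Y + nablaM X Z
  nablaM_smulX : ∀ (f : M → ℝ) (X Y : M → V),
    nablaM (fun q => f q • X q) Y = fun q => f q • nablaM X Y q
  nablaM_leibniz : ∀ (X : M → V) (f : M → ℝ) (Y : M → V),
    nablaM X (fun q => f q • Y q) = fun q => D X f q • Y q + f q • nablaM X Y q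
  nabla_addX : ∀ (X Y : M → V) (s : M → W), nabla (X + Y) s = nabla X s + nabla Y s
  nabla_addS : ∀ (X : M → V) (s t : M → W), nabla X (s + t) = nabla X s + nabla X t
  nabla_smulX : ∀ (f : M → ℝ) (X : M → V) (s : M → W),
    nabla (fun q => f q • X q) s = fun q => f q • nabla X s q
  nabla_leibniz : ∀ (X : M → V) (f : M → ℝ) (s : M → W),
    nabla X (fun q => f q • s q) = fun q => D X f q • s q + f q • nabla X s q
  compat_M : ∀ X Y Z : M → V,
    D X (fun q => ⟪Y q, Z q⟫) = fun q => ⟪nablaM X Y q, Z q⟫ + ⟪Y q, nablaM X Z q⟫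
  compat_N : ∀ (X : M → V) (s t : M → W),
    D X (fun q => ⟪s q, t q⟫) = fun q => ⟪nabla X s q, t q⟫ + ⟪s q, nabla X t q⟫
  torsion_free : ∀ (X Y : M → V) (f : M → ℝ),
    D (nablaM X Y - nablaM Y X) f = fun q => D X (D Y f) q - D Y (D X f) q
  pullback_curv : ∀ (X Y : M → V) (s : M → W) (q : M),
    curvSec nablaM nabla X Y s q = RN q (dphiPt q (X q)) (dphiPt q (Y q)) (s q)
  RN_antisym₁₂ : ∀ (q : M) (a b c d : W), ⟪RN q a b d, c⟫ = -⟪RN q b a d, c⟫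
  RN_antisym₃₄ : ∀ (q : M) (a b c d : W), ⟪RN q a b d, c⟫ = -⟪RN q a b c, d⟫
  RN_pair : ∀ (q : M) (a b c d : W), ⟪RN q a b d, c⟫ = ⟪RN q c d b, a⟫

namespace Geometry

variable (G : Geometry M V W)

/-- The tension field `τ(φ)`. -/
def tau (b : OrthonormalBasis ι ℝ V) : M → W :=
  tension b G.nablaM G.nabla G.dphiPt

/-- `|τ(φ)|²`. -/
def tausq (b : OrthonormalBasis ι ℝ V) : M → ℝ :=
  fun q => ⟪G.tau b q, G.tau b q⟫

/-- The mean curvature vector field `H = τ(φ)/2` of a Riemannian immersion from a surface. -/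
def meanH (b : OrthonormalBasis ι ℝ V) : M → W :=
  fun q => (2 : ℝ)⁻¹ • G.tau b q

/-- `|H|²`. -/
def Hsq (b : OrthonormalBasis ι ℝ V) : M → ℝ :=
  fun q => ⟪G.meanH b q, G.meanH b q⟫

/-- The biharmonic stress-energy tensor `S₂` of `φ`. -/
def S₂ (b : OrthonormalBasis ι ℝ V) (X Y : M → V) : M → ℝ :=
  S2 b G.nablaM G.nabla G.dphiPt X Y

/-- The Gaussian curvature of the surface `(M²,g)`. -/
def K (b : OrthonormalBasis (Fin 2) ℝ V) : M → ℝ := gaussK b G.nablaM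

/-- `φ` is biharmonic: `τ₂(φ) = tr(∇^φ)²τ(φ) − tr R^N(dφ(·),τ(φ))dφ(·) = 0`. -/
def IsBiharmonic (b : OrthonormalBasis ι ℝ V) : Prop :=
  ∀ q : M, lapSec b G.nablaM G.nabla (G.tau b) q
      + ∑ i, G.RN q (G.dphiPt q (b i)) (G.tau b q) (G.dphiPt q (b i)) = 0

/-- `φ` is harmonic: `τ(φ) = 0`. -/
def IsHarmonic (b : OrthonormalBasis ι ℝ V) : Prop :=
  ∀ q : M, G.tau b q = 0

/-- `φ` is proper-biharmonic: biharmonic but not harmonic. -/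
def IsProperBiharmonic (b : OrthonormalBasis ι ℝ V) : Prop :=
  G.IsBiharmonic b ∧ ¬ G.IsHarmonic b

/-- `(∇S₂)(X;Y,Z)`. -/
def nablaS₂ (b : OrthonormalBasis ι ℝ V) (X Y Z : M → V) : M → ℝ :=
  nablaT G.D G.nablaM (G.S₂ b) X Y Z

/-- The rough Laplacian `Δ^R S₂`. -/
def lapS₂ (b : OrthonormalBasis ι ℝ V) (X Y : M → V) : M → ℝ :=
  lapT b G.D G.nablaM (G.S₂ b) X Y

/-- `|S₂|²` (squared Hilbert–Schmidt norm). -/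
def normS₂sq (b : OrthonormalBasis ι ℝ V) : M → ℝ :=
  fun q => ∑ i, ∑ j, (G.S₂ b (fun _ => b i) (fun _ => b j) q) ^ 2

/-- `|∇S₂|²`. -/
def normNablaS₂sq (b : OrthonormalBasis ι ℝ V) : M → ℝ :=
  fun q => ∑ i, ∑ j, ∑ k,
    (G.nablaS₂ b (fun _ => b i) (fun _ => b j) (fun _ => b k) q) ^ 2

/-- `|d(|τ(φ)|²)|²`. -/
def normDtausq (b : OrthonormalBasis ι ℝ V) : M → ℝ :=
  fun q => ∑ i, (G.D (fun _ => b i) (G.tausq b) q) ^ 2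

end Geometry

/-- The geometric data of a Riemannian immersion: `dφ` is a pointwise linear isometry. -/
structure ImmersionGeometry (M V W : Type*)
    [NormedAddCommGroup V] [InnerProductSpace ℝ V]
    [NormedAddCommGroup W] [InnerProductSpace ℝ W] extends Geometry M V W where
  isometric : ∀ (q : M) (v w : V), ⟪dphiPt q v, dphiPt q w⟫ = ⟪v, w⟫

/-- `(∇_X A)(Y) = ∇^M_X (A Y) − A(∇^M_X Y)` for a `(1,1)`-tensor `A` on `M`
(used for the shape operator `A_H`). -/
def nablaOp (nablaM : (M → V) → (M → V) → (M → V))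
    (A : M → V →ₗ[ℝ] V) (X Y : M → V) : M → V :=
  fun q => nablaM X (fun r => A r (Y r)) q - A q (nablaM X Y q)

/-- **(from the proof of Proposition 3).**
Let `φ : (M²,g) → (Nⁿ,h)` be a biharmonic Riemannian immersion with constant mean
curvature `|H|`.  Then at each point
`|A_H|² = −|∇^⊥H|² + Σᵢ R^N(Xᵢ,H,Xᵢ,H)`, where `{X₁,X₂}` is an orthonormal frame of
`M`; in particular, if `R^N(U,V,U,V) ≤ K₀` for all orthonormal pairs `{U,V}`, then
`|A_H|² ≤ 2K₀|H|²`. -/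
theorem normAH_sq_identity
    (G : ImmersionGeometry M V W) (b : OrthonormalBasis (Fin 2) ℝ V)
    (AH : M → V →ₗ[ℝ] V)
    (hAH : ∀ (X Y : M → V) (q : M),
      ⟪AH q (X q), Y q⟫ = ⟪sff G.nablaM G.nabla G.dphiPt X Y q, G.toGeometry.meanH b q⟫)
    (DperpH : (M → V) → M → W)
    (hWeingarten : ∀ (X : M → V) (q : M),
      G.nabla X (G.toGeometry.meanH b) q = -(G.dphiPt q (AH q (X q))) + DperpH X q)
    (hperp : ∀ (X : M → V) (q : M) (v : V), ⟪DperpH X q, G.dphiPt q v⟫ = 0)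
    (hbih : G.toGeometry.IsBiharmonic b)
    (hcmc : ∃ c : ℝ, ∀ q : M, G.toGeometry.Hsq b q = c) :
    (∀ q : M, (∑ i, ⟪AH q (b i), AH q (b i)⟫)
        = -(∑ i, ⟪DperpH (fun _ => b i) q, DperpH (fun _ => b i) q⟫)
          + ∑ i, ⟪G.RN q (G.dphiPt q (b i)) (G.toGeometry.meanH b q)
              (G.toGeometry.meanH b q), G.dphiPt q (b i)⟫)
    ∧ ∀ K0 : ℝ,
        (∀ (q : M) (u v : W), ⟪u, u⟫ = 1 → ⟪v, v⟫ = 1 → ⟪u, v⟫ = 0 →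
          ⟪G.RN q u v v, u⟫ ≤ K0) →
        ∀ q : M, (∑ i, ⟪AH q (b i), AH q (b i)⟫) ≤ 2 * K0 * G.toGeometry.Hsq b q := by
  classical
  obtain ⟨c, hc⟩ := hcmc
  set H : M → W := G.toGeometry.meanH b with hHdef
  set τ : M → W := G.toGeometry.tau b with hτdef
  have hτH : ∀ q : M, τ q = (2:ℝ) • H q := by
    intro q
    have h : H q = (2:ℝ)⁻¹ • τ q := rfl
    rw [h, smul_smul]
    norm_num
  have hHH : (fun q : M => ⟪H q, H q⟫) = fun _ => c := funext fun q => hc q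
  have L1 : ∀ (X : M → V) (q : M), ⟪G.nabla X H q, H q⟫ = 0 := by
    intro X q
    have h1 : G.D X (fun q => ⟪H q, H q⟫) q = 0 := by rw [hHH, G.D_const]
    have h2 := congrFun (G.compat_N X H H) q
    rw [h2] at h1
    have h3 : ⟪H q, G.nabla X H q⟫ = ⟪G.nabla X H q, H q⟫ := real_inner_comm _ _
    linarith
  have L2 : ∀ (X : M → V) (q : M),
      ⟪G.nabla X (G.nabla X H) q, H q⟫ = -⟪G.nabla X H q, G.nabla X H q⟫ := by
    intro X q
    have h0 : (fun q : M => ⟪G.nabla X H q, H q⟫) = fun _ => (0:ℝ) := funext (L1 X)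
    have h1 : G.D X (fun q : M => ⟪G.nabla X H q, H q⟫) q = 0 := by rw [h0, G.D_const]
    have h2 := congrFun (G.compat_N X (G.nabla X H) H) q
    rw [h2] at h1
    linarith
  have F1 : ∀ (X : M → V), G.nabla X τ = fun q => (2:ℝ) • G.nabla X H q := by
    intro X
    have h1 : G.nabla X H
        = fun q => G.D X (fun _ => (2:ℝ)⁻¹) q • τ q + (2:ℝ)⁻¹ • G.nabla X τ q :=
      G.nabla_leibniz X (fun _ => (2:ℝ)⁻¹) τ
    funext q
    have h2 := congrFun h1 q
    rw [G.D_const] at h2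
    simp only [zero_smul, zero_add] at h2
    rw [h2, smul_smul]
    norm_num
  have F2 : ∀ (X : M → V) (q : M), ⟪G.nabla X τ q, H q⟫ = 0 := by
    intro X q
    rw [congrFun (F1 X) q, real_inner_smul_left, L1 X q, mul_zero]
  have F3 : ∀ (X : M → V) (q : M),
      ⟪G.nabla X (G.nabla X τ) q, H q⟫ = -(2:ℝ) * ⟪G.nabla X H q, G.nabla X H q⟫ := by
    intro X q
    rw [F1 X]
    have h1 := congrFun (G.nabla_leibniz X (fun _ => (2:ℝ)) (G.nabla X H)) q
    rw [G.D_const] at h1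
    simp only [zero_smul, zero_add] at h1
    rw [h1, real_inner_smul_left, L2 X q]
    ring
  have Wng : ∀ (X : M → V) (q : M), ⟪G.nabla X H q, G.nabla X H q⟫
      = ⟪AH q (X q), AH q (X q)⟫ + ⟪DperpH X q, DperpH X q⟫ := by
    intro X q
    rw [hWeingarten X q]
    have h1 : ⟪DperpH X q, G.dphiPt q (AH q (X q))⟫ = 0 := hperp X q _
    have h2 : ⟪G.dphiPt q (AH q (X q)), DperpH X q⟫ = 0 := by
      rw [real_inner_comm]; exact h1
    simp only [inner_add_left, inner_add_right, inner_neg_left, inner_neg_right,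
      inner_neg_neg, h1, h2, G.isometric, neg_zero, add_zero, zero_add]
    ring
  have Wb : ∀ (i : Fin 2) (q : M),
      ⟪G.nabla (fun _ => b i) H q, G.nabla (fun _ => b i) H q⟫
        = ⟪AH q (b i), AH q (b i)⟫
          + ⟪DperpH (fun _ => b i) q, DperpH (fun _ => b i) q⟫ :=
    fun i q => Wng (fun _ => b i) q
  have RNzero : ∀ (q : M) (a u : W), ⟪G.RN q a u u, u⟫ = 0 := by
    intro q a u
    have h := G.RN_antisym₃₄ q a u u u
    linarith
  have RNflip : ∀ (q : M) (u h : W), ⟪G.RN q u h h, u⟫ = -⟪G.RN q u h u, h⟫ :=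
    fun q u h => G.RN_antisym₃₄ q u h u h
  have RNterm : ∀ (q : M) (i : Fin 2),
      ⟪G.RN q (G.dphiPt q (b i)) (τ q) (G.dphiPt q (b i)), H q⟫
        = -(2:ℝ) * ⟪G.RN q (G.dphiPt q (b i)) (H q) (H q), G.dphiPt q (b i)⟫ := by
    intro q i
    rw [hτH q, RNflip q (G.dphiPt q (b i)) (H q)]
    rw [G.RN_pair q (G.dphiPt q (b i)) ((2:ℝ) • H q) (H q) (G.dphiPt q (b i))]
    rw [G.RN_antisym₃₄ q (H q) (G.dphiPt q (b i)) (G.dphiPt q (b i)) ((2:ℝ) • H q)]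
    rw [real_inner_smul_right]
    rw [G.RN_antisym₁₂ q (H q) (G.dphiPt q (b i)) (H q) (G.dphiPt q (b i))]
    ring
  have main : ∀ q : M,
      (∑ i, ⟪AH q (b i), AH q (b i)⟫)
        + (∑ i, ⟪DperpH (fun _ => b i) q, DperpH (fun _ => b i) q⟫)
        = ∑ i, ⟪G.RN q (G.dphiPt q (b i)) (H q) (H q), G.dphiPt q (b i)⟫ := by
    intro q
    have hb := hbih q
    have hb2 := congrArg (fun y : W => ⟪y, H q⟫) hb
    simp only [inner_zero_left] at hb2
    rw [inner_add_left, sum_inner] at hb2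
    have hterm : ∀ i : Fin 2,
        ⟪n2Sec G.nablaM G.nabla (fun _ => b i) (fun _ => b i) τ q, H q⟫
          = -(2:ℝ) * (⟪AH q (b i), AH q (b i)⟫
              + ⟪DperpH (fun _ => b i) q, DperpH (fun _ => b i) q⟫) := by
      intro i
      show ⟪G.nabla (fun _ => b i) (G.nabla (fun _ => b i) τ) q
          - G.nabla (G.nablaM (fun _ => b i) (fun _ => b i)) τ q, H q⟫ = _
      rw [inner_sub_left, F3 (fun _ => b i) q,
        F2 (G.nablaM (fun _ => b i) (fun _ => b i)) q, Wb i q]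
      ring
    have hlap : ⟪lapSec b G.nablaM G.nabla τ q, H q⟫
        = (2:ℝ) * (⟪AH q (b 0), AH q (b 0)⟫
              + ⟪DperpH (fun _ => b 0) q, DperpH (fun _ => b 0) q⟫)
          + (2:ℝ) * (⟪AH q (b 1), AH q (b 1)⟫
              + ⟪DperpH (fun _ => b 1) q, DperpH (fun _ => b 1) q⟫) := by
      show ⟪-∑ i : Fin 2, n2Sec G.nablaM G.nabla (fun _ => b i) (fun _ => b i) τ q, H q⟫
          = _
      rw [inner_neg_left, sum_inner]
      simp only [Fin.sum_univ_two]
      rw [hterm 0, hterm 1]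
      ring
    rw [hlap] at hb2
    simp only [Fin.sum_univ_two] at hb2 ⊢
    rw [RNterm q 0, RNterm q 1] at hb2
    linarith
  refine ⟨fun q => by have := main q; linarith, ?_⟩
  intro K0 hK q
  have hmain := main q
  have hHsq : G.toGeometry.Hsq b q = ⟪H q, H q⟫ := rfl
  rw [hHsq]
  have hA0 : (0:ℝ) ≤ ⟪AH q (b 0), AH q (b 0)⟫ := real_inner_self_nonneg
  have hA1 : (0:ℝ) ≤ ⟪AH q (b 1), AH q (b 1)⟫ := real_inner_self_nonneg
  have hB0 : (0:ℝ) ≤ ⟪DperpH (fun _ => b 0) q, DperpH (fun _ => b 0) q⟫ :=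
    real_inner_self_nonneg
  have hB1 : (0:ℝ) ≤ ⟪DperpH (fun _ => b 1) q, DperpH (fun _ => b 1) q⟫ :=
    real_inner_self_nonneg
  simp only [Fin.sum_univ_two] at hmain ⊢
  by_cases h0 : H q = 0
  · have hT : ∀ i : Fin 2,
        ⟪G.RN q (G.dphiPt q (b i)) (H q) (H q), G.dphiPt q (b i)⟫ = 0 := by
      intro i
      rw [h0]
      have h := G.RN_antisym₃₄ q (G.dphiPt q (b i)) 0 (G.dphiPt q (b i)) 0
      rw [inner_zero_right] at h
      simpa using h
    rw [hT 0, hT 1] at hmain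
    rw [h0, inner_zero_right]
    nlinarith
  · have hip : (0:ℝ) < ⟪H q, H q⟫ :=
      lt_of_le_of_ne real_inner_self_nonneg (Ne.symm (inner_self_ne_zero.mpr h0))
    have hn0 : ‖H q‖ ≠ 0 := norm_ne_zero_iff.mpr h0
    obtain ⟨v, hv⟩ : ∃ v : W, v = ‖H q‖⁻¹ • H q := ⟨_, rfl⟩
    have hvv : ⟪v, v⟫ = 1 := by
      rw [hv, real_inner_smul_left, real_inner_smul_right, real_inner_self_eq_norm_sq]
      field_simp
    have hHnv : H q = ‖H q‖ • v := by
      rw [hv, smul_smul, mul_inv_cancel₀ hn0, one_smul]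
    have hu : ∀ i j : Fin 2, ⟪G.dphiPt q (b i), G.dphiPt q (b j)⟫
        = if i = j then 1 else 0 := by
      intro i j
      rw [G.isometric]
      exact orthonormal_iff_ite.mp b.orthonormal i j
    have hTi : ∀ i : Fin 2,
        ⟪G.RN q (G.dphiPt q (b i)) (H q) (H q), G.dphiPt q (b i)⟫
          ≤ ⟪H q, H q⟫ * ((1 - ⟪v, G.dphiPt q (b i)⟫ ^ 2) * K0) := by
      intro i
      obtain ⟨u, hu_def⟩ : ∃ u : W, u = G.dphiPt q (b i) := ⟨_, rfl⟩
      rw [← hu_def]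
      have huu : ⟪u, u⟫ = 1 := by rw [hu_def, hu i i]; simp
      obtain ⟨α, hα⟩ : ∃ α : ℝ, α = ⟪v, u⟫ := ⟨_, rfl⟩
      rw [← hα]
      obtain ⟨w, hwdef⟩ : ∃ w : W, w = v - α • u := ⟨_, rfl⟩
      have hwu : ⟪w, u⟫ = 0 := by
        rw [hwdef, inner_sub_left, real_inner_smul_left, huu, ← hα]
        ring
      have hww : ⟪w, w⟫ = 1 - α ^ 2 := by
        rw [hwdef]
        simp only [inner_sub_left, inner_sub_right, real_inner_smul_left,
          real_inner_smul_right, hvv, huu, real_inner_comm u v]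
        rw [hα, real_inner_comm v u]
        ring
      have hvw : v = α • u + w := by rw [hwdef]; abel
      have ha : ⟪G.RN q u (H q) (H q), u⟫ = ‖H q‖ ^ 2 * ⟪G.RN q v u u, v⟫ := by
        conv_lhs => rw [hHnv]
        rw [G.RN_antisym₃₄ q u (‖H q‖ • v) u (‖H q‖ • v)]
        rw [real_inner_smul_right]
        rw [G.RN_pair q u (‖H q‖ • v) v u]
        rw [G.RN_antisym₃₄ q v u u (‖H q‖ • v)]
        rw [real_inner_smul_right]
        ring
      have hzero : ∀ a : W, ⟪G.RN q a u u, u⟫ = 0 := fun a => RNzero q a u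
      have hb1 : ⟪G.RN q v u u, v⟫ = ⟪G.RN q w u u, w⟫ := by
        have e1 : ⟪G.RN q v u u, v⟫ = ⟪G.RN q v u u, α • u⟫ + ⟪G.RN q v u u, w⟫ := by
          rw [← inner_add_right, ← hvw]
        have e2 : ⟪G.RN q v u u, α • u⟫ = 0 := by
          rw [real_inner_smul_right, hzero, mul_zero]
        have e3 : ⟪G.RN q v u u, w⟫ = ⟪G.RN q w u u, v⟫ := G.RN_pair q v u w u
        have e4 : ⟪G.RN q w u u, v⟫ = ⟪G.RN q w u u, α • u⟫ + ⟪G.RN q w u u, w⟫ := by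
          rw [← inner_add_right, ← hvw]
        have e5 : ⟪G.RN q w u u, α • u⟫ = 0 := by
          rw [real_inner_smul_right, hzero, mul_zero]
        rw [e1, e2, e3, e4, e5, zero_add, zero_add]
      have hQK : ⟪G.RN q w u u, w⟫ ≤ (1 - α ^ 2) * K0 := by
        by_cases hw0 : w = 0
        · have h00 : (0:ℝ) = 1 - α ^ 2 := by rw [← hww, hw0, inner_zero_left]
          rw [hw0, inner_zero_right, ← h00, zero_mul]
        · have hm0 : ‖w‖ ≠ 0 := norm_ne_zero_iff.mpr hw0
          obtain ⟨z, hz⟩ : ∃ z : W, z = ‖w‖⁻¹ • w := ⟨_, rfl⟩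
          have hzz : ⟪z, z⟫ = 1 := by
            rw [hz, real_inner_smul_left, real_inner_smul_right,
              real_inner_self_eq_norm_sq]
            field_simp
          have hzu : ⟪z, u⟫ = 0 := by
            rw [hz, real_inner_smul_left, hwu, mul_zero]
          have hwz : w = ‖w‖ • z := by
            rw [hz, smul_smul, mul_inv_cancel₀ hm0, one_smul]
          have hQ : ⟪G.RN q w u u, w⟫ = ‖w‖ ^ 2 * ⟪G.RN q z u u, z⟫ := by
            conv_lhs => rw [hwz]
            rw [real_inner_smul_right]
            rw [G.RN_pair q (‖w‖ • z) u z u]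
            rw [real_inner_smul_right]
            ring
          have hKz : ⟪G.RN q z u u, z⟫ ≤ K0 := hK q z u hzz huu hzu
          have hm2 : ‖w‖ ^ 2 = 1 - α ^ 2 := by rw [← real_inner_self_eq_norm_sq, hww]
          calc ⟪G.RN q w u u, w⟫ = ‖w‖ ^ 2 * ⟪G.RN q z u u, z⟫ := hQ
            _ ≤ ‖w‖ ^ 2 * K0 := mul_le_mul_of_nonneg_left hKz (sq_nonneg _)
            _ = (1 - α ^ 2) * K0 := by rw [hm2]
      calc ⟪G.RN q u (H q) (H q), u⟫ = ‖H q‖ ^ 2 * ⟪G.RN q v u u, v⟫ := ha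
        _ = ‖H q‖ ^ 2 * ⟪G.RN q w u u, w⟫ := by rw [hb1]
        _ ≤ ‖H q‖ ^ 2 * ((1 - α ^ 2) * K0) := mul_le_mul_of_nonneg_left hQK (sq_nonneg _)
        _ = ⟪H q, H q⟫ * ((1 - α ^ 2) * K0) := by rw [← real_inner_self_eq_norm_sq]
    have hU : Orthonormal ℝ (fun i : Fin 2 => G.dphiPt q (b i)) :=
      orthonormal_iff_ite.mpr hu
    have hbes := hU.sum_inner_products_le (x := v) (s := Finset.univ)
    have hbes2 : ⟪v, G.dphiPt q (b 0)⟫ ^ 2 + ⟪v, G.dphiPt q (b 1)⟫ ^ 2 ≤ 1 := by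
      have h1 : ‖v‖ ^ 2 = 1 := by rw [← real_inner_self_eq_norm_sq, hvv]
      simp only [Fin.sum_univ_two, Real.norm_eq_abs, sq_abs] at hbes
      rw [h1, real_inner_comm v (G.dphiPt q (b 0)),
        real_inner_comm v (G.dphiPt q (b 1))] at hbes
      exact hbes
    have hT0 := hTi 0
    have hT1 := hTi 1
    rcases le_or_gt 0 K0 with hK0 | hK0
    · have hPK : (0:ℝ) ≤ ⟪H q, H q⟫ * K0 := mul_nonneg hip.le hK0
      nlinarith [mul_nonneg hPK (sq_nonneg ⟪v, G.dphiPt q (b 0)⟫),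
        mul_nonneg hPK (sq_nonneg ⟪v, G.dphiPt q (b 1)⟫)]
    · have hPK : (0:ℝ) < ⟪H q, H q⟫ * (-K0) := mul_pos hip (neg_pos.mpr hK0)
      nlinarith [mul_nonneg (mul_nonneg hip.le (neg_nonneg.mpr hK0.le))
        (sub_nonneg.mpr hbes2)]

end ArXiv13057020

end
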